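/- Quantum choice with local coin implements probabilistic choice: with the notation above, let E_P be a trace-preserving completely positive map on H_C (the coin program), ρ a density operator on H_C, and p_i = ⟨i| E_P(ρ) |i⟩. Then for every density operator σ on H: tr_{H_C}( F_total( σ ⊗ E_P(ρ) ) ) = ∑_{i=1}^n p_i · E_i(σ), where F_total(τ) = ∑_{(δ_1,...,δ_n)} F(δ_1,...,δ_n) τ F(δ_1,...,δ_n)† is the channel of the guarded composition of full families {E_{i,δ}}, and E_i(σ) = ∑_δ E_{i,δ} σ E_{i,δ}†. -/

import Mathlib

noncomputable section
open scoped InnerProductSpace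
open Finset

/-- Coordinate model of the tensor product `H_C ⊗ H` along a fixed orthonormal
basis of the `n`-dimensional coin space `H_C`. -/
abbrev TensorSp (n : ℕ) (H : Type*) [NormedAddCommGroup H] [InnerProductSpace ℂ H] : Type _ :=
  PiLp 2 (fun _ : Fin n => H)

variable {n : ℕ} {H : Type*} [NormedAddCommGroup H] [InnerProductSpace ℂ H]

/-- the pure tensor `c ⊗ ψ`. -/
def pureTensor (c : EuclideanSpace ℂ (Fin n)) (ψ : H) : TensorSp n H :=
  WithLp.toLp 2 (fun i => c i • ψ)

/-- the block-diagonal operator `∑ᵢ |i⟩⟨i| ⊗ Uᵢ`, i.e. the guarded composition of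
the `Uᵢ` along the computational basis of the coin space. -/
def blockDiag (U : Fin n → (H →ₗ[ℂ] H)) : TensorSp n H →ₗ[ℂ] TensorSp n H where
  toFun x := WithLp.toLp 2 (fun i => U i (x i))
  map_add' x y := by ext i; simp [map_add]
  map_smul' c x := by ext i; simp [map_smul]

/-- `A ⊗ B` in the coordinate model, `A` acting on the coin space. -/
def tensorOp (A : EuclideanSpace ℂ (Fin n) →ₗ[ℂ] EuclideanSpace ℂ (Fin n))
    (B : H →ₗ[ℂ] H) : TensorSp n H →ₗ[ℂ] TensorSp n H where
  toFun x := WithLp.toLp 2 (fun i => ∑ b : Fin n, A (EuclideanSpace.single b 1) i • B (x b))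
  map_add' x y := by
    ext i; simp [map_add, smul_add, Finset.sum_add_distrib]
  map_smul' c x := by
    ext i; simp [map_smul, Finset.smul_sum, smul_comm c]

/-- `A ⊗ I_H`. -/
def tensorLeft (A : EuclideanSpace ℂ (Fin n) →ₗ[ℂ] EuclideanSpace ℂ (Fin n)) :
    TensorSp n H →ₗ[ℂ] TensorSp n H :=
  tensorOp A LinearMap.id

/-- A linear operator is unitary iff it preserves inner products and is bijective. -/
def IsUnitaryOp {E : Type*} [NormedAddCommGroup E] [InnerProductSpace ℂ E]
    (A : E →ₗ[ℂ] E) : Prop :=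
  (∀ x y : E, ⟪A x, A y⟫_ℂ = ⟪x, y⟫_ℂ) ∧ Function.Bijective A

/-- Positive (semidefinite) operator. -/
def IsPosOp {E : Type*} [NormedAddCommGroup E] [InnerProductSpace ℂ E]
    (A : E →ₗ[ℂ] E) : Prop :=
  ∀ x : E, (⟪x, A x⟫_ℂ).im = 0 ∧ 0 ≤ (⟪x, A x⟫_ℂ).re

/-- Löwner order `A ⊑ B`. -/
def Loewner {E : Type*} [NormedAddCommGroup E] [InnerProductSpace ℂ E]
    (A B : E →ₗ[ℂ] E) : Prop :=
  IsPosOp (B - A)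

section guarded
variable [FiniteDimensional ℂ H] {Δ : Fin n → Type*} [∀ k, Fintype (Δ k)]

/-- the coefficients `λ_{kδ}`. -/
def lam (F : ∀ k, Δ k → (H →ₗ[ℂ] H)) (k : Fin n) (δ : Δ k) : ℝ :=
  Real.sqrt ((LinearMap.trace ℂ H (LinearMap.adjoint (F k δ) ∘ₗ F k δ)).re /
    ∑ τ : Δ k, (LinearMap.trace ℂ H (LinearMap.adjoint (F k τ) ∘ₗ F k τ)).re)

/-- the guarded composition `□ᵢ |i⟩ → Fᵢ` of operator-valued functions, evaluated at
`⊕ᵢ δᵢ`. -/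
def guardedComp (F : ∀ k, Δ k → (H →ₗ[ℂ] H)) (δ : ∀ k, Δ k) :
    TensorSp n H →ₗ[ℂ] TensorSp n H where
  toFun x := WithLp.toLp 2 (fun i => (∏ k ∈ Finset.univ.erase i, lam F k (δ k)) • F i (δ i) (x i))
  map_add' x y := by ext i; simp [map_add, smul_add]
  map_smul' c x := by
    ext i; simp [map_smul, smul_comm c]

end guarded

/-- partial trace over the coin space of an operator on `H_C ⊗ H`. -/
def coinProj (i : Fin n) : TensorSp n H →ₗ[ℂ] H where
  toFun x := x i
  map_add' _ _ := rfl
  map_smul' _ _ := rfl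

def coinIncl (i : Fin n) : H →ₗ[ℂ] TensorSp n H where
  toFun ψ := WithLp.toLp 2 (Pi.single i ψ)
  map_add' x y := by ext j; by_cases h : j = i <;> simp [Pi.single_apply, h]
  map_smul' c x := by ext j; by_cases h : j = i <;> simp [Pi.single_apply, h]

def trCoin (A : TensorSp n H →ₗ[ℂ] TensorSp n H) : H →ₗ[ℂ] H :=
  ∑ i : Fin n, coinProj i ∘ₗ A ∘ₗ coinIncl i

/-- the outer product `|x⟩⟨y|`. -/
def outer {E : Type*} [NormedAddCommGroup E] [InnerProductSpace ℂ E]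
    (x y : E) : E →ₗ[ℂ] E :=
  ((innerSL ℂ y).toLinearMap).smulRight x

/-!
The guarded composition `F(δ)` is block diagonal along the coin basis, its `i`-th block being
`(∏_{k ≠ i} λ_{kδ_k}) E_{i,δ_i}`. Hence the `i`-th diagonal coin block of
`F(δ) (A ⊗ σ) F(δ)†` is `⟨i|A|i⟩ (∏_{k ≠ i} λ_{kδ_k}²) E_{i,δ_i} σ E_{i,δ_i}†`. Summing over
all `δ`, the coordinates `δ_k` with `k ≠ i` enter only through these weights, which sum to
`∏_{k ≠ i} ∑_τ λ_{kτ}² = 1`: fullness of each family gives `∑_τ tr(E_{k,τ}† E_{k,τ}) = dim H`.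
-/

namespace Finset

theorem sum_prod_erase_smul {ι R M : Type*} [Fintype ι] [DecidableEq ι] {κ : ι → Type*}
    [∀ k, Fintype (κ k)] [CommSemiring R] [AddCommMonoid M] [Module R M]
    (w : ∀ k, κ k → R) (i : ι) (v : κ i → M) :
    ∑ δ : (∀ k, κ k), (∏ k ∈ univ.erase i, w k (δ k)) • v (δ i)
      = (∏ k ∈ univ.erase i, ∑ τ, w k τ) • ∑ τ, v τ := by
  have herase : ∀ k, k ∈ univ.erase i ↔ k ≠ i := fun k => by simp
  have hsplit : ∀ (τ : κ i) (r : ∀ j : { j // j ≠ i }, κ j),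
      ∏ k ∈ univ.erase i, w k ((Equiv.piSplitAt i κ).symm (τ, r) k)
        = ∏ j : { j // j ≠ i }, w j (r j) := by
    intro τ r
    rw [prod_subtype _ herase]
    exact prod_congr rfl fun j _ => by simp [Equiv.piSplitAt_symm_apply, j.2]
  have hcoord : ∀ (τ : κ i) (r : ∀ j : { j // j ≠ i }, κ j),
      (Equiv.piSplitAt i κ).symm (τ, r) i = τ := by
    simp [Equiv.piSplitAt_symm_apply]
  rw [← (Equiv.piSplitAt i κ).symm.sum_comp, Fintype.sum_prod_type, prod_subtype _ herase,
    Fintype.prod_sum, smul_sum]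
  refine sum_congr rfl fun τ _ => ?_
  simp only [hsplit, hcoord]
  rw [sum_smul]

end Finset

section CoinOperators

theorem coinProj_comp_blockDiag (U : Fin n → (H →ₗ[ℂ] H)) (i : Fin n) :
    coinProj i ∘ₗ blockDiag U = U i ∘ₗ coinProj i :=
  rfl

theorem blockDiag_comp_coinIncl (U : Fin n → (H →ₗ[ℂ] H)) (i : Fin n) :
    blockDiag U ∘ₗ coinIncl i = coinIncl i ∘ₗ U i := by
  ext ψ j
  by_cases h : j = i
  · subst h; simp [blockDiag, coinIncl]
  · simp [blockDiag, coinIncl, h]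

theorem coinProj_comp_tensorOp_comp_coinIncl
    (A : EuclideanSpace ℂ (Fin n) →ₗ[ℂ] EuclideanSpace ℂ (Fin n)) (B : H →ₗ[ℂ] H) (i : Fin n) :
    coinProj i ∘ₗ tensorOp A B ∘ₗ coinIncl i =
      ⟪EuclideanSpace.single i (1 : ℂ), A (EuclideanSpace.single i 1)⟫_ℂ • B := by
  ext ψ
  change ∑ b, A (EuclideanSpace.single b 1) i • B ((Pi.single i ψ : Fin n → H) b) = _
  rw [sum_eq_single i (fun b _ hb => by simp [hb]) (by simp)]
  simp [EuclideanSpace.inner_single_left]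

theorem trCoin_sum {ι : Type*} (s : Finset ι) (T : ι → TensorSp n H →ₗ[ℂ] TensorSp n H) :
    trCoin (∑ δ ∈ s, T δ) = ∑ δ ∈ s, trCoin (T δ) := by
  simp only [trCoin]
  rw [sum_comm]
  refine sum_congr rfl fun i _ => ?_
  ext ψ
  simp [map_sum]

variable [FiniteDimensional ℂ H]

theorem adjoint_blockDiag (U : Fin n → (H →ₗ[ℂ] H)) :
    LinearMap.adjoint (blockDiag U) = blockDiag fun i => LinearMap.adjoint (U i) := by
  symm
  rw [LinearMap.eq_adjoint_iff]
  intro x y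
  simp only [PiLp.inner_apply]
  exact sum_congr rfl fun i _ => LinearMap.adjoint_inner_left _ _ _

theorem trCoin_conj_blockDiag_tensorOp (U : Fin n → (H →ₗ[ℂ] H))
    (A : EuclideanSpace ℂ (Fin n) →ₗ[ℂ] EuclideanSpace ℂ (Fin n)) (B : H →ₗ[ℂ] H) :
    trCoin (blockDiag U ∘ₗ tensorOp A B ∘ₗ LinearMap.adjoint (blockDiag U)) =
      ∑ i, ⟪EuclideanSpace.single i (1 : ℂ), A (EuclideanSpace.single i 1)⟫_ℂ •
        (U i ∘ₗ B ∘ₗ LinearMap.adjoint (U i)) := by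
  refine sum_congr rfl fun i _ => ?_
  rw [adjoint_blockDiag]
  calc coinProj i ∘ₗ (blockDiag U ∘ₗ tensorOp A B ∘ₗ blockDiag fun i => LinearMap.adjoint (U i))
          ∘ₗ coinIncl i
      = U i ∘ₗ (coinProj i ∘ₗ tensorOp A B ∘ₗ coinIncl i) ∘ₗ LinearMap.adjoint (U i) := by
        simp only [LinearMap.comp_assoc, blockDiag_comp_coinIncl]
        rw [← LinearMap.comp_assoc _ (blockDiag U), coinProj_comp_blockDiag, LinearMap.comp_assoc]
    _ = _ := by
        rw [coinProj_comp_tensorOp_comp_coinIncl, LinearMap.smul_comp, LinearMap.comp_smul]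

end CoinOperators

section Guarded

variable [FiniteDimensional ℂ H]

theorem real_smul_comp_comp_adjoint_real_smul (r : ℝ) (T B : H →ₗ[ℂ] H) :
    (r • T) ∘ₗ B ∘ₗ LinearMap.adjoint (r • T) = r ^ 2 • (T ∘ₗ B ∘ₗ LinearMap.adjoint T) := by
  simp only [RCLike.real_smul_eq_coe_smul (K := ℂ), map_smulₛₗ, RCLike.conj_ofReal,
    LinearMap.smul_comp, LinearMap.comp_smul, smul_smul, sq, RCLike.ofReal_mul]

theorem re_trace_adjoint_comp_self_nonneg (T : H →ₗ[ℂ] H) :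
    0 ≤ (LinearMap.trace ℂ H (LinearMap.adjoint T ∘ₗ T)).re :=
  (Complex.nonneg_iff.mp T.isPositive_adjoint_comp_self.trace_nonneg).1

variable {Δ : Fin n → Type*} [∀ k, Fintype (Δ k)]

theorem sum_lam_sq_eq_one [Nontrivial H] (E : ∀ k, Δ k → (H →ₗ[ℂ] H)) (k : Fin n)
    (hk : ∑ δ : Δ k, LinearMap.adjoint (E k δ) ∘ₗ E k δ = LinearMap.id) :
    ∑ τ : Δ k, lam E k τ ^ 2 = 1 := by
  have hsum : ∑ τ : Δ k, (LinearMap.trace ℂ H (LinearMap.adjoint (E k τ) ∘ₗ E k τ)).re =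
      Module.finrank ℂ H := by
    rw [← Complex.re_sum, ← map_sum, hk, LinearMap.trace_id, Complex.natCast_re]
  have hdim : (0 : ℝ) < Module.finrank ℂ H := by exact_mod_cast Module.finrank_pos
  simp only [lam, hsum]
  rw [sum_congr rfl fun τ _ => Real.sq_sqrt
    (div_nonneg (re_trace_adjoint_comp_self_nonneg _) hdim.le), ← sum_div, hsum,
    div_self hdim.ne']

theorem guardedComp_eq_blockDiag (E : ∀ k, Δ k → (H →ₗ[ℂ] H)) (δ : ∀ k, Δ k) :
    guardedComp E δ = blockDiag fun i => (∏ k ∈ univ.erase i, lam E k (δ k)) • E i (δ i) :=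
  rfl

theorem trCoin_conj_guardedComp_tensorOp (E : ∀ k, Δ k → (H →ₗ[ℂ] H)) (δ : ∀ k, Δ k)
    (A : EuclideanSpace ℂ (Fin n) →ₗ[ℂ] EuclideanSpace ℂ (Fin n)) (B : H →ₗ[ℂ] H) :
    trCoin (guardedComp E δ ∘ₗ tensorOp A B ∘ₗ LinearMap.adjoint (guardedComp E δ)) =
      ∑ i, ⟪EuclideanSpace.single i (1 : ℂ), A (EuclideanSpace.single i 1)⟫_ℂ •
        (∏ k ∈ univ.erase i, lam E k (δ k) ^ 2) •
          (E i (δ i) ∘ₗ B ∘ₗ LinearMap.adjoint (E i (δ i))) := by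
  rw [guardedComp_eq_blockDiag, trCoin_conj_blockDiag_tensorOp]
  refine sum_congr rfl fun i _ => ?_
  rw [real_smul_comp_comp_adjoint_real_smul, prod_pow]

end Guarded

theorem quantum_choice_implements_probabilistic_choice_general {n : ℕ} {H : Type*}
    [NormedAddCommGroup H] [InnerProductSpace ℂ H] [FiniteDimensional ℂ H]
    {Δ : Fin n → Type*} [∀ k, Fintype (Δ k)] (E : ∀ k, Δ k → (H →ₗ[ℂ] H))
    (hfull : ∀ k, ∑ δ : Δ k, LinearMap.adjoint (E k δ) ∘ₗ E k δ = LinearMap.id)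
    {m : ℕ} (K : Fin m → (EuclideanSpace ℂ (Fin n) →ₗ[ℂ] EuclideanSpace ℂ (Fin n)))
    (ρ : EuclideanSpace ℂ (Fin n) →ₗ[ℂ] EuclideanSpace ℂ (Fin n))
    (σ : H →ₗ[ℂ] H) :
    trCoin (∑ δ : (∀ k, Δ k),
        guardedComp E δ ∘ₗ
          tensorOp (∑ j : Fin m, K j ∘ₗ ρ ∘ₗ LinearMap.adjoint (K j)) σ ∘ₗ
          LinearMap.adjoint (guardedComp E δ))
      = ∑ i : Fin n,
          ⟪EuclideanSpace.single i (1 : ℂ),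
            (∑ j : Fin m, K j ∘ₗ ρ ∘ₗ LinearMap.adjoint (K j))
              (EuclideanSpace.single i (1 : ℂ))⟫_ℂ •
          (∑ δi : Δ i, E i δi ∘ₗ σ ∘ₗ LinearMap.adjoint (E i δi)) := by
  rcases subsingleton_or_nontrivial H with _ | _
  -- for `H = 0` the `λ`s are junk (`0 / 0`), but then every operator on `H` vanishes
  · exact Subsingleton.elim _ _
  simp_rw [trCoin_sum, trCoin_conj_guardedComp_tensorOp]
  rw [sum_comm]
  refine sum_congr rfl fun i _ => ?_
  rw [← smul_sum, sum_prod_erase_smul (fun k τ => lam E k τ ^ 2) i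
    fun τ => E i τ ∘ₗ σ ∘ₗ LinearMap.adjoint (E i τ)]
  rw [prod_congr rfl fun k _ => sum_lam_sq_eq_one E k (hfull k), prod_const_one, one_smul]

/-- quantum choice with a local coin implements probabilistic choice:
`tr_{H_C}(F_total(σ ⊗ E_P(ρ))) = ∑ᵢ pᵢ · Eᵢ(σ)` with `pᵢ = ⟨i|E_P(ρ)|i⟩`, where the
coin program `E_P` is given by Kraus operators `K j`. -/
theorem quantum_choice_implements_probabilistic_choice {n : ℕ} {H : Type*}
    [NormedAddCommGroup H] [InnerProductSpace ℂ H] [FiniteDimensional ℂ H]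
    {Δ : Fin n → Type*} [∀ k, Fintype (Δ k)] (E : ∀ k, Δ k → (H →ₗ[ℂ] H))
    (hfull : ∀ k, ∑ δ : Δ k, LinearMap.adjoint (E k δ) ∘ₗ E k δ = LinearMap.id)
    {m : ℕ} (K : Fin m → (EuclideanSpace ℂ (Fin n) →ₗ[ℂ] EuclideanSpace ℂ (Fin n)))
    (hK : ∑ j : Fin m, LinearMap.adjoint (K j) ∘ₗ K j = LinearMap.id)
    (ρ : EuclideanSpace ℂ (Fin n) →ₗ[ℂ] EuclideanSpace ℂ (Fin n))
    (hρ : IsPosOp ρ) (hρtr : LinearMap.trace ℂ _ ρ = 1)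
    (σ : H →ₗ[ℂ] H) (hσ : IsPosOp σ) (hσtr : LinearMap.trace ℂ H σ = 1) :
    trCoin (∑ δ : (∀ k, Δ k),
        guardedComp E δ ∘ₗ
          tensorOp (∑ j : Fin m, K j ∘ₗ ρ ∘ₗ LinearMap.adjoint (K j)) σ ∘ₗ
          LinearMap.adjoint (guardedComp E δ))
      = ∑ i : Fin n,
          ⟪EuclideanSpace.single i (1 : ℂ),
            (∑ j : Fin m, K j ∘ₗ ρ ∘ₗ LinearMap.adjoint (K j))
              (EuclideanSpace.single i (1 : ℂ))⟫_ℂ •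
          (∑ δi : Δ i, E i δi ∘ₗ σ ∘ₗ LinearMap.adjoint (E i δi)) :=
  quantum_choice_implements_probabilistic_choice_general E hfull K ρ σ
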